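/- arXiv:math/0701067 — 7 statements merged into one kernel-verified Lean document; each statement's English description precedes it below -/
import Mathlib

section
/- Let z : ℝ → ℝ be a smooth non-constant periodic function satisfying 0 ≤ z'' + (n-1)·(z')² on ℝ for some integer n ≥ 2. Then a contradiction follows; i.e., no smooth non-constant periodic function z satisfies this differential inequality. -/
/-- Analytic core of Proposition 2.7(3): no smooth non-constant periodic function
`z : ℝ → ℝ` satisfies `0 ≤ z'' + (n-1)·(z')²` on `ℝ` for an integer `n ≥ 2`. -/
theorem stmt_0 (z : ℝ → ℝ) (hz : ContDiff ℝ (⊤ : ℕ∞) z)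
    (n : ℕ) (hn : 2 ≤ n)
    (T : ℝ) (hT : 0 < T) (hper : ∀ t, z (t + T) = z t)
    (hnonconst : ¬ ∀ s t, z s = z t)
    (hineq : ∀ t, 0 ≤ deriv (deriv z) t + ((n : ℝ) - 1) * (deriv z t) ^ 2) :
    False := by
  set c : ℝ := (n : ℝ) - 1 with hc
  have hcpos : 0 < c := by
    have : (2 : ℝ) ≤ (n : ℝ) := by exact_mod_cast hn
    simp only [hc]; linarith
  -- differentiability facts
  have hzd : Differentiable ℝ z := hz.differentiable (by simp)
  have hz'd : Differentiable ℝ (deriv z) :=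
    (contDiff_infty_iff_deriv.mp (hz.of_le (by simp))).2.differentiable (by simp)
  set w : ℝ → ℝ := fun t => Real.exp (c * z t) with hw
  have hwd : ∀ t, HasDerivAt w (Real.exp (c * z t) * (c * deriv z t)) t := by
    intro t
    exact ((hzd t).hasDerivAt.const_mul c).exp
  have hderivw : deriv w = fun t => Real.exp (c * z t) * (c * deriv z t) := by
    funext t; exact (hwd t).deriv
  have hwd2 : ∀ t, HasDerivAt (deriv w)
      (Real.exp (c * z t) * (c * deriv z t) * (c * deriv z t)
        + Real.exp (c * z t) * (c * deriv (deriv z) t)) t := by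
    intro t
    rw [hderivw]
    exact ((((hzd t).hasDerivAt.const_mul c).exp)).mul
      (((hz'd t).hasDerivAt.const_mul c))
  have hw2nonneg : ∀ t, 0 ≤ deriv (deriv w) t := by
    intro t
    rw [(hwd2 t).deriv]
    have h1 : 0 < Real.exp (c * z t) := Real.exp_pos _
    have h2 := hineq t
    have : Real.exp (c * z t) * (c * deriv z t) * (c * deriv z t)
        + Real.exp (c * z t) * (c * deriv (deriv z) t)
        = Real.exp (c * z t) * c * (deriv (deriv z) t + c * (deriv z t) ^ 2) := by ring
    rw [this]
    exact mul_nonneg (mul_nonneg h1.le hcpos.le) h2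
  -- convexity of w
  have hconv : ConvexOn ℝ Set.univ w := by
    apply convexOn_of_deriv2_nonneg' convex_univ
    · intro t _; exact (hwd t).differentiableAt.differentiableWithinAt
    · intro t _; exact (hwd2 t).differentiableAt.differentiableWithinAt
    · intro t _
      simpa [Function.iterate_succ, Function.comp] using hw2nonneg t
  -- periodicity of w with period k*T
  have hperk : ∀ (k : ℕ) (t : ℝ), z (t + k * T) = z t := by
    intro k
    induction k with
    | zero => intro t; simp
    | succ k ih =>
      intro t
      have : t + (k + 1 : ℕ) * T = (t + k * T) + T := by push_cast; ring
      rw [this, hper, ih]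
  have hwperk : ∀ (k : ℕ) (t : ℝ), w (t + k * T) = w t := by
    intro k t; simp only [hw, hperk k t]
  -- w is constant: for a < b, w b ≤ w a and w a ≤ w b
  have key : ∀ a b : ℝ, a < b → w a = w b := by
    intro a b hab
    obtain ⟨k, hk⟩ := exists_nat_gt ((b - a) / T)
    have hkT : b - a < k * T := by
      rw [div_lt_iff₀ hT] at hk; linarith
    have hle1 : w b ≤ w a := by
      have hmem : b ∈ segment ℝ a (a + k * T) := by
        rw [segment_eq_Icc (by linarith)]
        constructor <;> [linarith; linarith]
      have := hconv.le_on_segment (Set.mem_univ a) (Set.mem_univ (a + k * T)) hmem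
      rwa [hwperk k a, max_self] at this
    have hle2 : w a ≤ w b := by
      have hba : w (b - k * T) = w b := by
        have := hwperk k (b - k * T)
        simpa using this.symm
      have hmem : a ∈ segment ℝ (b - k * T) b := by
        rw [segment_eq_Icc (by linarith)]
        constructor <;> [linarith; linarith]
      have := hconv.le_on_segment (Set.mem_univ (b - k * T)) (Set.mem_univ b) hmem
      rwa [hba, max_self] at this
    linarith
  apply hnonconst
  intro s t
  have hwst : w s = w t := by
    rcases lt_trichotomy s t with h | h | h
    · exact key s t h
    · rw [h]
    · exact (key t s h).symm
  have : c * z s = c * z t := Real.exp_injective hwst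
  exact mul_left_cancel₀ (ne_of_gt hcpos) this
end

section
/- Let λ : ℝ → ℝ be a smooth positive function satisfying λ² · (log λ)'' = k on ℝ for a constant k > 0. Then there exist constants c > 0 and b ∈ ℝ such that λ(t) = cosh(√k · c · t + b)/c for all t. -/
/-- ODE from Theorem 6.3(2): a smooth positive global solution of
`λ²·(log λ)'' = k` with `k > 0` is `λ(t) = cosh(√k·c·t + b)/c` for some
`c > 0` and `b ∈ ℝ`. -/
theorem stmt_4 (lam : ℝ → ℝ) (hs : ContDiff ℝ (⊤ : ℕ∞) lam) (hpos : ∀ t, 0 < lam t)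
    (k : ℝ) (hk : 0 < k)
    (hode : ∀ t, (lam t) ^ 2 * deriv (deriv (fun s => Real.log (lam s))) t = k) :
    ∃ c > (0 : ℝ), ∃ b : ℝ, ∀ t, lam t = Real.cosh (Real.sqrt k * c * t + b) / c := by
  obtain ⟨f, hfdef⟩ : ∃ f, f = deriv lam := ⟨_, rfl⟩
  have hs' : ContDiff ℝ (⊤ : ℕ∞) lam := hs.of_le (by simp)
  have hd1 : Differentiable ℝ lam := hs'.differentiable (by simp)
  have hd2 : Differentiable ℝ f := by
    rw [hfdef]
    exact (contDiff_infty_iff_deriv.mp hs').2.differentiable (by simp)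
  have hne : ∀ t, lam t ≠ 0 := fun t => (hpos t).ne'
  have hL : ∀ t, HasDerivAt lam (f t) t := by
    intro t; rw [hfdef]; exact (hd1 t).hasDerivAt
  have hF : ∀ t, HasDerivAt f (deriv f t) t := fun t => (hd2 t).hasDerivAt
  have hlog : deriv (fun s => Real.log (lam s)) = fun t => f t / lam t := by
    funext t; exact ((hL t).log (hne t)).deriv
  -- the ODE in terms of lam and f = lam'
  have hode' : ∀ t, deriv f t * lam t - f t * f t = k := by
    intro t
    have h2 : HasDerivAt (fun s => f s / lam s)
        ((deriv f t * lam t - f t * f t) / lam t ^ 2) t := (hF t).div (hL t) (hne t)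
    have h3 := hode t
    rw [hlog, h2.deriv] at h3
    field_simp [hne t] at h3
    linarith [h3]
  -- energy
  obtain ⟨E, hEdef⟩ : ∃ E : ℝ, E = (f 0 ^ 2 + k) / lam 0 ^ 2 := ⟨_, rfl⟩
  have hEpos : 0 < E := by
    have h0 := hpos 0
    rw [hEdef]; positivity
  have hEnergy : ∀ t, (f t ^ 2 + k) / lam t ^ 2 = E := by
    intro t
    have hg : ∀ x, HasDerivAt (fun s => (f s ^ 2 + k) / lam s ^ 2) 0 x := by
      intro x
      have hnum : HasDerivAt (fun s => f s ^ 2 + k) (2 * f x ^ 1 * deriv f x) x :=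
        ((hF x).pow 2).add_const k
      have hden : HasDerivAt (fun s => lam s ^ 2) (2 * lam x ^ 1 * f x) x := (hL x).pow 2
      have h := hnum.div hden (pow_ne_zero 2 (hne x))
      have hz : (2 * f x ^ 1 * deriv f x * lam x ^ 2 - (f x ^ 2 + k) * (2 * lam x ^ 1 * f x))
          / (lam x ^ 2) ^ 2 = 0 := by
        rw [div_eq_zero_iff]
        left
        linear_combination (2 * f x * lam x) * hode' x
      rw [hz] at h
      exact h
    rw [hEdef]
    exact is_const_of_deriv_eq_zero (fun x => (hg x).differentiableAt)
      (fun x => (hg x).deriv) t 0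
  obtain ⟨ω, hωdef⟩ : ∃ w : ℝ, w = Real.sqrt E := ⟨_, rfl⟩
  have hωpos : 0 < ω := hωdef ▸ Real.sqrt_pos.mpr hEpos
  have hω2 : ω ^ 2 = E := hωdef ▸ Real.sq_sqrt hEpos.le
  have hωne : ω ≠ 0 := hωpos.ne'
  have hsecond : ∀ t, deriv f t = ω ^ 2 * lam t := by
    intro t
    have h1 := hEnergy t
    rw [div_eq_iff (pow_ne_zero 2 (hne t)), ← hω2] at h1
    have h2 := hode' t
    have h4 : deriv f t * lam t = ω ^ 2 * lam t * lam t := by linear_combination h2 + h1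
    exact mul_right_cancel₀ (hne t) h4
  have hch : ∀ t, HasDerivAt (fun s => Real.cosh (ω * s)) (Real.sinh (ω * t) * ω) t := by
    intro t; simpa using ((hasDerivAt_id t).const_mul ω).cosh
  have hsh : ∀ t, HasDerivAt (fun s => Real.sinh (ω * s)) (Real.cosh (ω * t) * ω) t := by
    intro t; simpa using ((hasDerivAt_id t).const_mul ω).sinh
  -- the two conserved linear combinations
  have hA : ∀ t, lam t * Real.cosh (ω * t) - f t / ω * Real.sinh (ω * t) = lam 0 := by
    have hg : ∀ x, HasDerivAt
        (fun s => lam s * Real.cosh (ω * s) - f s / ω * Real.sinh (ω * s)) 0 x := by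
      intro x
      have h := ((hL x).mul (hch x)).sub (((hF x).div_const ω).mul (hsh x))
      rw [hsecond x] at h
      have hz : f x * Real.cosh (ω * x) + lam x * (Real.sinh (ω * x) * ω)
          - (ω ^ 2 * lam x / ω * Real.sinh (ω * x) + f x / ω * (Real.cosh (ω * x) * ω)) = 0 := by
        field_simp
        ring
      rw [hz] at h
      exact h
    intro t
    have := is_const_of_deriv_eq_zero (fun x => (hg x).differentiableAt)
      (fun x => (hg x).deriv) t 0
    simpa using this
  have hB : ∀ t, f t / ω * Real.cosh (ω * t) - lam t * Real.sinh (ω * t) = f 0 / ω := by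
    have hg : ∀ x, HasDerivAt
        (fun s => f s / ω * Real.cosh (ω * s) - lam s * Real.sinh (ω * s)) 0 x := by
      intro x
      have h := (((hF x).div_const ω).mul (hch x)).sub ((hL x).mul (hsh x))
      rw [hsecond x] at h
      have hz : ω ^ 2 * lam x / ω * Real.cosh (ω * x) + f x / ω * (Real.sinh (ω * x) * ω)
          - (f x * Real.sinh (ω * x) + lam x * (Real.cosh (ω * x) * ω)) = 0 := by
        field_simp
        ring
      rw [hz] at h
      exact h
    intro t
    have := is_const_of_deriv_eq_zero (fun x => (hg x).differentiableAt)
      (fun x => (hg x).deriv) t 0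
    simpa using this
  -- representation
  have hrep : ∀ t, lam t = lam 0 * Real.cosh (ω * t) + f 0 / ω * Real.sinh (ω * t) := by
    intro t
    have h1 := hA t
    have h2 := hB t
    have h3 := Real.cosh_sq_sub_sinh_sq (ω * t)
    linear_combination Real.cosh (ω * t) * h1 + Real.sinh (ω * t) * h2 - lam t * h3
  -- constants
  have hsk : (0 : ℝ) < Real.sqrt k := Real.sqrt_pos.mpr hk
  have hsk2 : Real.sqrt k ^ 2 = k := Real.sq_sqrt hk.le
  obtain ⟨r, hrdef⟩ : ∃ r : ℝ, r = Real.sqrt k / ω := ⟨_, rfl⟩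
  have hrpos : 0 < r := by rw [hrdef]; positivity
  have hrne : r ≠ 0 := hrpos.ne'
  have hr2 : r ^ 2 = k / ω ^ 2 := by rw [hrdef, div_pow, hsk2]
  have hkey : ω ^ 2 * lam 0 ^ 2 - f 0 ^ 2 = k := by
    have h1 := hEnergy 0
    rw [div_eq_iff (pow_ne_zero 2 (hne 0)), ← hω2] at h1
    linarith [h1]
  have h5 : r ^ 2 + (f 0 / ω) ^ 2 = lam 0 ^ 2 := by
    rw [hr2, div_pow, ← add_div, div_eq_iff (pow_ne_zero 2 hωne)]
    linarith [hkey]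
  refine ⟨ω / Real.sqrt k, by positivity, Real.arsinh (f 0 / ω / r), ?_⟩
  intro t
  have harg : Real.sqrt k * (ω / Real.sqrt k) * t = ω * t := by
    field_simp
  have hcoshb : Real.cosh (Real.arsinh (f 0 / ω / r)) = lam 0 / r := by
    rw [Real.cosh_arsinh]
    have h6 : r ^ 2 * ω ^ 2 = k := by
      rw [hr2, div_mul_cancel₀ _ (pow_ne_zero 2 hωne)]
    rw [show 1 + (f 0 / ω / r) ^ 2 = (lam 0 / r) ^ 2 by
      field_simp
      linear_combination h6 - hkey]
    exact Real.sqrt_sq (div_pos (hpos 0) hrpos).le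
  have hsinhb : Real.sinh (Real.arsinh (f 0 / ω / r)) = f 0 / ω / r :=
    Real.sinh_arsinh _
  rw [harg, Real.cosh_add, hcoshb, hsinhb, hrep t, hrdef]
  have hskne : Real.sqrt k ≠ 0 := hsk.ne'
  field_simp
end

section
/- Let k < 0. There is no smooth positive function λ : ℝ → ℝ satisfying λ² · (log λ)'' = k on all of ℝ. -/
/-- If the derivative of `f` is eventually bounded above by a negative constant on a right
half-line, then `f` takes a nonpositive value. -/
lemma keyL_aux (f : ℝ → ℝ) (hf : Differentiable ℝ f) (a : ℝ) (ha : a < 0) (t0 : ℝ)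
    (h : ∀ t, t0 ≤ t → deriv f t ≤ a) : ∃ t, f t ≤ 0 := by
  by_cases h0 : f t0 ≤ 0
  · exact ⟨t0, h0⟩
  push_neg at h0
  set T : ℝ := t0 - f t0 / a with hT
  have hfa : f t0 / a < 0 := div_neg_of_pos_of_neg h0 ha
  have hT0 : t0 ≤ T := by simp only [hT]; linarith
  have hg : AntitoneOn (fun t => f t - a * t) (Set.Ici t0) := by
    apply antitoneOn_of_deriv_nonpos (convex_Ici t0)
    · exact (hf.sub (differentiable_id.const_mul a)).continuous.continuousOn
    · exact fun x _ => ((hf x).sub ((differentiableAt_id.const_mul a))).differentiableWithinAt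
    · intro x hx
      rw [interior_Ici] at hx
      have hder : deriv (fun t => f t - a * t) x = deriv f x - a := by
        have hh := ((hf x).hasDerivAt.fun_sub ((hasDerivAt_id x).const_mul a)).deriv
        simpa using hh
      rw [hder]
      have := h x (le_of_lt hx)
      linarith
  have hle := hg (Set.self_mem_Ici) (Set.mem_Ici.mpr hT0) hT0
  simp only at hle
  have haT : a * (T - t0) = -f t0 := by
    have hane : a ≠ 0 := ne_of_lt ha
    rw [hT]
    field_simp
    ring
  refine ⟨T, ?_⟩
  nlinarith

/-- Mirror of `keyL_aux`: derivative bounded below by a positive constant on a left half-line. -/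
lemma keyR_aux (f : ℝ → ℝ) (hf : Differentiable ℝ f) (a : ℝ) (ha : 0 < a) (t0 : ℝ)
    (h : ∀ t, t ≤ t0 → a ≤ deriv f t) : ∃ t, f t ≤ 0 := by
  by_cases h0 : f t0 ≤ 0
  · exact ⟨t0, h0⟩
  push_neg at h0
  set T : ℝ := t0 - f t0 / a with hT
  have hfa : 0 < f t0 / a := div_pos h0 ha
  have hT0 : T ≤ t0 := by simp only [hT]; linarith
  have hg : MonotoneOn (fun t => f t - a * t) (Set.Iic t0) := by
    apply monotoneOn_of_deriv_nonneg (convex_Iic t0)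
    · exact (hf.sub (differentiable_id.const_mul a)).continuous.continuousOn
    · exact fun x _ => ((hf x).sub ((differentiableAt_id.const_mul a))).differentiableWithinAt
    · intro x hx
      rw [interior_Iic] at hx
      have hder : deriv (fun t => f t - a * t) x = deriv f x - a := by
        have hh := ((hf x).hasDerivAt.fun_sub ((hasDerivAt_id x).const_mul a)).deriv
        simpa using hh
      rw [hder]
      have := h x (le_of_lt hx)
      linarith
  have hle := hg (Set.mem_Iic.mpr hT0) (Set.self_mem_Iic) hT0
  simp only at hle
  have haT : a * (T - t0) = -f t0 := by
    have hane : a ≠ 0 := ne_of_gt ha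
    rw [hT]
    field_simp
    ring
  refine ⟨T, ?_⟩
  nlinarith

/-- From Theorem 6.3(2): for `k < 0` there is no smooth positive solution on all of
`ℝ` of `λ²·(log λ)'' = k`. -/
theorem stmt_5 (lam : ℝ → ℝ) (hs : ContDiff ℝ (⊤ : ℕ∞) lam) (hpos : ∀ t, 0 < lam t)
    (k : ℝ) (hk : k < 0)
    (hode : ∀ t, (lam t) ^ 2 * deriv (deriv (fun s => Real.log (lam s))) t = k) :
    False := by
  have hs2 : ContDiff ℝ (⊤:ℕ∞) lam := hs.of_le (by simp)
  have hsd2 : ContDiff ℝ (⊤:ℕ∞) (deriv lam) := (contDiff_infty_iff_deriv.mp hs2).2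
  have hld : Differentiable ℝ lam := hs2.differentiable (by simp)
  have hdd : Differentiable ℝ (deriv lam) := hsd2.differentiable (by simp)
  have hne : ∀ t, lam t ≠ 0 := fun t => ne_of_gt (hpos t)
  set L : ℝ → ℝ := deriv lam with hL
  set L' : ℝ → ℝ := deriv (deriv lam) with hL'
  -- first derivative of log ∘ lam
  have hlog : (deriv fun s => Real.log (lam s)) = fun t => L t / lam t := by
    funext t
    exact (((hld t).hasDerivAt).log (hne t)).deriv
  -- second derivative
  have h2 : ∀ t, HasDerivAt (fun s => L s / lam s)
      ((L' t * lam t - L t * L t) / (lam t) ^ 2) t :=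
    fun t => ((hdd t).hasDerivAt).div ((hld t).hasDerivAt) (hne t)
  have hkey : ∀ t, lam t * L' t = (L t) ^ 2 + k := by
    intro t
    have h3 := hode t
    rw [hlog, (h2 t).deriv] at h3
    have hl2 : (lam t) ^ 2 ≠ 0 := pow_ne_zero 2 (hne t)
    field_simp at h3
    rw [mul_div_cancel_left₀ _ (hne t)] at h3
    nlinarith [h3]
  -- energy function is constant
  set E : ℝ → ℝ := fun t => ((L t) ^ 2 + k) / (lam t) ^ 2 with hE
  have hEder : ∀ t, HasDerivAt E 0 t := by
    intro t
    have hnum : HasDerivAt (fun s => (L s) ^ 2 + k) (2 * L t * L' t) t := by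
      have := (((hdd t).hasDerivAt).fun_pow 2).add_const k
      simpa [mul_comm, mul_assoc, mul_left_comm] using this
    have hden : HasDerivAt (fun s => (lam s) ^ 2) (2 * lam t * L t) t := by
      have := ((hld t).hasDerivAt).fun_pow 2
      simpa [mul_comm, mul_assoc, mul_left_comm] using this
    have hdiv := hnum.fun_div hden (pow_ne_zero 2 (hne t))
    refine hdiv.congr_deriv (Eq.symm ?_)
    rw [eq_comm, div_eq_zero_iff]
    left
    linear_combination (2 * lam t * L t) * (hkey t)
  have hEdiff : Differentiable ℝ E := fun t => (hEder t).differentiableAt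
  have hEzero : ∀ t, deriv E t = 0 := fun t => (hEder t).deriv
  set C : ℝ := E 0 with hCdef
  have hEconst : ∀ t, E t = C := fun t => is_const_of_deriv_eq_zero hEdiff hEzero t 0
  have hCsq : ∀ t, (L t) ^ 2 = C * (lam t) ^ 2 - k := by
    intro t
    have := hEconst t
    rw [hE] at this
    have hl2 : (lam t) ^ 2 ≠ 0 := pow_ne_zero 2 (hne t)
    field_simp at this
    rw [div_eq_iff hl2] at this
    linarith
  have hL'eq : ∀ t, L' t = C * lam t := by
    intro t
    have h1 := hkey t
    rw [hCsq t] at h1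
    have : lam t * L' t = lam t * (C * lam t) := by ring_nf; ring_nf at h1; linarith
    exact mul_left_cancel₀ (hne t) this
  -- √(-k)
  set a : ℝ := Real.sqrt (-k) with hadef
  have ha : 0 < a := Real.sqrt_pos.mpr (by linarith)
  have ha2 : a ^ 2 = -k := Real.sq_sqrt (by linarith)
  rcases le_or_gt 0 C with hC | hC
  · -- C ≥ 0 : |L| ≥ a everywhere, L never vanishes, constant sign
    have hge : ∀ t, a ^ 2 ≤ (L t) ^ 2 := by
      intro t
      rw [ha2, hCsq t]
      nlinarith [mul_nonneg hC (sq_nonneg (lam t))]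
    have hne0 : ∀ t, L t ≠ 0 := by
      intro t h0
      have := hge t
      rw [h0] at this
      nlinarith
    have hsign : (∀ t, L t < 0) ∨ (∀ t, 0 < L t) := by
      rcases lt_or_gt_of_ne (hne0 0) with h0 | h0
      · left
        intro t
        by_contra hcon
        push_neg at hcon
        have ht : 0 < L t := lt_of_le_of_ne hcon (Ne.symm (hne0 t))
        have hivt := intermediate_value_uIcc (a := (0:ℝ)) (b := t)
          (hdd.continuous.continuousOn (s := Set.uIcc 0 t))
        have h0m : (0:ℝ) ∈ Set.uIcc (L 0) (L t) := by
          rw [Set.mem_uIcc]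
          left; constructor <;> linarith
        obtain ⟨c, _, hc⟩ := hivt h0m
        exact hne0 c hc
      · right
        intro t
        by_contra hcon
        push_neg at hcon
        have ht : L t < 0 := lt_of_le_of_ne hcon (hne0 t)
        have hivt := intermediate_value_uIcc (a := (0:ℝ)) (b := t)
          (hdd.continuous.continuousOn (s := Set.uIcc 0 t))
        have h0m : (0:ℝ) ∈ Set.uIcc (L 0) (L t) := by
          rw [Set.mem_uIcc]
          right; constructor <;> linarith
        obtain ⟨c, _, hc⟩ := hivt h0m
        exact hne0 c hc
    rcases hsign with hneg | hposL
    · have hbd : ∀ t, (0:ℝ) ≤ t → deriv lam t ≤ -a := by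
        intro t _
        have h1 := hge t
        have h2 := hneg t
        nlinarith
      obtain ⟨t, ht⟩ := keyL_aux lam hld (-a) (by linarith) 0 hbd
      linarith [hpos t]
    · have hbd : ∀ t, t ≤ (0:ℝ) → a ≤ deriv lam t := by
        intro t _
        have h1 := hge t
        have h2 := hposL t
        nlinarith
      obtain ⟨t, ht⟩ := keyR_aux lam hld a ha 0 hbd
      linarith [hpos t]
  · -- C < 0 : L' < 0 everywhere, L strictly antitone
    have hL'neg : ∀ t, L' t < 0 := fun t => by
      rw [hL'eq t]; exact mul_neg_of_neg_of_pos hC (hpos t)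
    have hanti : StrictAnti L := strictAnti_of_deriv_neg (f := L) hL'neg
    rcases lt_or_ge (L 1) 0 with h1 | h1
    · have hbd : ∀ t, (1:ℝ) ≤ t → deriv lam t ≤ L 1 := fun t ht =>
        hanti.antitone ht
      obtain ⟨t, ht⟩ := keyL_aux lam hld (L 1) h1 1 hbd
      linarith [hpos t]
    · have hb : 0 < L (-1) := lt_of_le_of_lt h1 (hanti (by norm_num))
      have hbd : ∀ t, t ≤ (-1:ℝ) → L (-1) ≤ deriv lam t := fun t ht =>
        hanti.antitone ht
      obtain ⟨t, ht⟩ := keyR_aux lam hld (L (-1)) hb (-1) hbd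
      linarith [hpos t]
end

section
/- Let M be a Lorentzian manifold, E and E' two timelike unit vector fields, and Π a degenerate plane at a point. Then 𝒦_{E'}(Π) = 𝒦_E(Π)/g(u,E')², where u ∈ Π is the unique lightlike vector with g(u,E) = 1. In particular, the sign of the lightlike sectional curvature of Π does not depend on the choice of timelike unit vector field. -/
theorem LinearMap.map_smul_smul_middle {𝕜 V : Type*} [CommSemiring 𝕜] [AddCommMonoid V]
    [Module 𝕜 V] (R : V →ₗ[𝕜] V →ₗ[𝕜] V →ₗ[𝕜] V →ₗ[𝕜] 𝕜) (c : 𝕜) (a u b : V) :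
    R a (c • u) (c • u) b = c ^ 2 * R a u u b := by
  simp only [map_smul, LinearMap.smul_apply, smul_eq_mul]
  ring

theorem stmt_9_general {V : Type*} [AddCommGroup V] [Module ℝ V]
    (g : V →ₗ[ℝ] V →ₗ[ℝ] ℝ)
    (R : V →ₗ[ℝ] V →ₗ[ℝ] V →ₗ[ℝ] V →ₗ[ℝ] ℝ)
    (E' : V)
    (u v : V) (huE' : g u E' ≠ 0) :
    R v ((g u E')⁻¹ • u) ((g u E')⁻¹ • u) v / g v v
      = (R v u u v / g v v) / (g u E') ^ 2 ∧
    (0 < R v ((g u E')⁻¹ • u) ((g u E')⁻¹ • u) v / g v v ↔ 0 < R v u u v / g v v) := by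
  have hscale : R v ((g u E')⁻¹ • u) ((g u E')⁻¹ • u) v / g v v
      = (R v u u v / g v v) / (g u E') ^ 2 := by
    rw [R.map_smul_smul_middle, inv_pow, inv_mul_eq_div, div_div, div_div, mul_comm]
  refine ⟨hscale, ?_⟩
  rw [hscale]
  exact div_pos_iff_of_pos_right (sq_pos_of_ne_zero huE')

/-- The lightlike sectional curvature of a degenerate plane `Π = span(u,v)` with
respect to a timelike unit `E` is `𝒦_E(Π) = R(v,u,u,v)/g(v,v)`, where `u ∈ Π` is
the unique lightlike vector with `g(u,E) = 1`.  For another timelike unit `E'`,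
the lightlike vector in `Π` normalized for `E'` is `u' = u/g(u,E')`, and
`𝒦_{E'}(Π) = 𝒦_E(Π)/g(u,E')²`; in particular the sign of the lightlike sectional
curvature does not depend on the choice of timelike unit vector field. -/
theorem stmt_9 {V : Type*} [AddCommGroup V] [Module ℝ V]
    (g : V →ₗ[ℝ] V →ₗ[ℝ] ℝ) (hg : ∀ x y, g x y = g y x)
    (R : V →ₗ[ℝ] V →ₗ[ℝ] V →ₗ[ℝ] V →ₗ[ℝ] ℝ)
    (E E' : V) (hE : g E E = -1) (hE' : g E' E' = -1)
    (u v : V) (hu : g u u = 0) (huE : g u E = 1) (huE' : g u E' ≠ 0)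
    (hv : 0 < g v v) (hvu : g v u = 0) :
    R v ((g u E')⁻¹ • u) ((g u E')⁻¹ • u) v / g v v
      = (R v u u v / g v v) / (g u E') ^ 2 ∧
    (0 < R v ((g u E')⁻¹ • u) ((g u E')⁻¹ • u) v / g v v ↔ 0 < R v u u v / g v v) :=
  stmt_9_general g R E' u v huE'
end

section
/- Let M be a GRW spacetime I ×_f L of dimension 4 whose stress–energy tensor is that of a perfect fluid with unit timelike field E = ∂t, energy ρ and pressure η (so Ric = (ρ+η)ω⊗ω + ½(ρ−η)g, ω the 1-form metrically equivalent to E). If ρ + η ≠ 0, then along E the identity (ρ'/(ρ+η))' = (1/3)(ρ'/(ρ+η))² + ½(ρ+3η) holds, where ' denotes derivative along E. -/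
/-- Lemma 3.1: in a Robertson-Walker space `I ×_f L` (with `L` of constant curvature
`C`), the perfect-fluid energy `ρ` and pressure `η` are determined by the warping
function `f` (Friedmann equations); if `ρ + η ≠ 0` then along `E = ∂t`
`(ρ'/(ρ+η))' = (1/3)(ρ'/(ρ+η))² + ½(ρ+3η)`. -/
theorem stmt_12 (f : ℝ → ℝ) (hf : ContDiff ℝ (⊤ : ℕ∞) f) (hpos : ∀ t, 0 < f t)
    (C : ℝ) (ρ η : ℝ → ℝ)
    (hρ : ∀ t, ρ t = 3 * ((deriv f t) ^ 2 + C) / (f t) ^ 2)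
    (hη : ∀ t, η t = -(2 * deriv (deriv f) t / f t + ((deriv f t) ^ 2 + C) / (f t) ^ 2))
    (hne : ∀ t, ρ t + η t ≠ 0) :
    ∀ t, deriv (fun s => deriv ρ s / (ρ s + η s)) t
      = (1 / 3) * (deriv ρ t / (ρ t + η t)) ^ 2 + (1 / 2) * (ρ t + 3 * η t) := by
  have hf1 : Differentiable ℝ f := hf.differentiable (by simp)
  have hf'c : ContDiff ℝ (⊤ : ℕ∞) (deriv f) := (contDiff_infty_iff_deriv.mp (hf.of_le (by simp))).2
  have hf2 : Differentiable ℝ (deriv f) := hf'c.differentiable (by simp)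
  have hsum : ∀ t, ρ t + η t
      = -2 * (deriv (deriv f) t * f t - ((deriv f t) ^ 2 + C)) / (f t) ^ 2 := by
    intro t
    have hfne : f t ≠ 0 := (hpos t).ne'
    rw [hρ t, hη t]
    field_simp
    ring
  have hne' : ∀ t, deriv (deriv f) t * f t - ((deriv f t) ^ 2 + C) ≠ 0 := by
    intro t h
    apply hne t
    rw [hsum t, h]
    simp
  -- key: ρ'/(ρ+η) = -3 f'/f
  have key : ∀ t, deriv ρ t / (ρ t + η t) = -3 * deriv f t / f t := by
    intro t
    have h1 : HasDerivAt f (deriv f t) t := (hf1 t).hasDerivAt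
    have h2 : HasDerivAt (deriv f) (deriv (deriv f) t) t := (hf2 t).hasDerivAt
    have hfne : f t ≠ 0 := (hpos t).ne'
    have hρd : HasDerivAt ρ
        (6 * deriv f t * (deriv (deriv f) t * f t - ((deriv f t) ^ 2 + C)) / (f t) ^ 3) t := by
      have hρfun : ρ = fun s => 3 * ((deriv f s) ^ 2 + C) / (f s) ^ 2 := funext hρ
      rw [hρfun]
      have hnum : HasDerivAt (fun s => 3 * ((deriv f s) ^ 2 + C))
          (3 * (2 * deriv f t * deriv (deriv f) t)) t := by
        have := ((h2.fun_pow 2).add_const C).const_mul 3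
        refine this.congr_deriv ?_
        norm_num
      have hden : HasDerivAt (fun s => (f s) ^ 2) (2 * f t * deriv f t) t := by
        have := h1.fun_pow 2
        refine this.congr_deriv ?_
        norm_num
      have := hnum.div hden (pow_ne_zero 2 hfne)
      refine this.congr_deriv ?_
      field_simp
      ring
    rw [hρd.deriv, hsum t]
    have hA : deriv (deriv f) t * f t - ((deriv f t) ^ 2 + C) ≠ 0 := hne' t
    rw [div_div_div_eq]
    rw [div_eq_div_iff (by positivity) hfne]
    ring_nf
  intro t
  have h1 : HasDerivAt f (deriv f t) t := (hf1 t).hasDerivAt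
  have h2 : HasDerivAt (deriv f) (deriv (deriv f) t) t := (hf2 t).hasDerivAt
  have hfne : f t ≠ 0 := (hpos t).ne'
  have hg : (fun s => deriv ρ s / (ρ s + η s)) = fun s => -3 * deriv f s / f s :=
    funext key
  rw [hg, key t]
  have hd : HasDerivAt (fun s => -3 * deriv f s / f s)
      ((-3 * deriv (deriv f) t * f t - (-3 * deriv f t) * deriv f t) / (f t) ^ 2) t :=
    (h2.const_mul (-3)).div h1 hfne
  rw [hd.deriv, hρ t, hη t]
  field_simp
  ring
end

section
/- Consider the manifold ℝ³ with coordinates (t,x,y) and the Lorentzian metric g = (1+cos(t-x))dt² + 2(3+cos(t-x))dt dx + (1+cos(t-x))dx² + (4+2cos(t-x))dy². Then the vector field U = f(t,x)(∂t - ∂x), with f(t,x) = √(2+cos(t-x)), is timelike, irrotational and conformal: ∇_X U = X₁(f)·X for X ∈ {X₁, X₂, X₃} where X₁ = ∂t - ∂x, X₂ = ∂t + ∂x, X₃ = ∂y. -/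
namespace Stmt17

/-- The Lorentzian metric
`g = (1+cos(t-x))dt² + 2(3+cos(t-x))dt dx + (1+cos(t-x))dx² + (4+2cos(t-x))dy²`
on `ℝ³` with coordinates `p = (t,x,y)`, as a field of bilinear forms. -/
noncomputable def gM (p u v : ℝ × ℝ × ℝ) : ℝ :=
  (1 + Real.cos (p.1 - p.2.1)) * (u.1 * v.1 + u.2.1 * v.2.1)
    + (3 + Real.cos (p.1 - p.2.1)) * (u.1 * v.2.1 + u.2.1 * v.1)
    + (4 + 2 * Real.cos (p.1 - p.2.1)) * (u.2.2 * v.2.2)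

noncomputable def f (p : ℝ × ℝ × ℝ) : ℝ := Real.sqrt (2 + Real.cos (p.1 - p.2.1))

def x1 : ℝ × ℝ × ℝ := (1, -1, 0)
def x2 : ℝ × ℝ × ℝ := (1, 1, 0)
def x3 : ℝ × ℝ × ℝ := (0, 0, 1)

/-- The constant coordinate vector fields `X₁ = ∂t - ∂x`, `X₂ = ∂t + ∂x`,
`X₃ = ∂y`. -/
def X1 : ℝ × ℝ × ℝ → ℝ × ℝ × ℝ := fun _ => x1
def X2 : ℝ × ℝ × ℝ → ℝ × ℝ × ℝ := fun _ => x2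
def X3 : ℝ × ℝ × ℝ → ℝ × ℝ × ℝ := fun _ => x3

/-- The vector field `U = f(t,x)·(∂t - ∂x)`, `f = √(2+cos(t-x))`. -/
noncomputable def U : ℝ × ℝ × ℝ → ℝ × ℝ × ℝ := fun p => f p • x1

/-- Lie bracket of vector fields on `ℝ³`. -/
noncomputable def br (V W : ℝ × ℝ × ℝ → ℝ × ℝ × ℝ) (p : ℝ × ℝ × ℝ) : ℝ × ℝ × ℝ :=
  fderiv ℝ W p (V p) - fderiv ℝ V p (W p)

/-! With `f² = 2 + cos(t-x)` the metric splits as `g = f² ((dt+dx)² + 2dy²) - (dt-dx)²`, and `X₁`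
is null for the first summand, so `g(X₁, ·) = -2(dt-dx)` is constant and `g(U, ·) = -2f (dt-dx)`;
in particular `g(U,U) = -4f² < 0`. The frame fields are constant, so they commute and
`[U, X] = -X(f) X₁`; since `f` depends on `t - x` only, `df = ½ X₁(f) (dt-dx)`. Substituting
these into the Koszul expression leaves `U(f²) ((dt+dx)² + 2dy²)(X,Z) - 2 X₁(f) (dt-dx)²(X,Z)`,
which is `2 X₁(f) g(X,Z)` because `U(f²) = 2f² X₁(f)`. -/

open Real

noncomputable def phase : ℝ × ℝ × ℝ →L[ℝ] ℝ :=
  ContinuousLinearMap.fst ℝ ℝ (ℝ × ℝ) -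
    (ContinuousLinearMap.fst ℝ ℝ ℝ).comp (ContinuousLinearMap.snd ℝ ℝ (ℝ × ℝ))

def gFlat (u v : ℝ × ℝ × ℝ) : ℝ := (u.1 + u.2.1) * (v.1 + v.2.1) + 2 * (u.2.2 * v.2.2)

lemma phase_apply (v : ℝ × ℝ × ℝ) : phase v = v.1 - v.2.1 := rfl

lemma phase_x1 : phase x1 = 2 := by
  norm_num [phase_apply, x1]

lemma gFlat_x1_left (v : ℝ × ℝ × ℝ) : gFlat x1 v = 0 := by
  simp [gFlat, x1]

lemma gFlat_comm (u v : ℝ × ℝ × ℝ) : gFlat u v = gFlat v u := by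
  simp only [gFlat]
  ring

lemma two_add_cos_pos (s : ℝ) : 0 < 2 + cos s := by
  linarith [neg_one_le_cos s]

lemma f_sq (p : ℝ × ℝ × ℝ) : f p ^ 2 = 2 + cos (phase p) :=
  sq_sqrt (two_add_cos_pos _).le

lemma f_pos (p : ℝ × ℝ × ℝ) : 0 < f p :=
  sqrt_pos.2 (two_add_cos_pos _)

lemma gM_eq (p u v : ℝ × ℝ × ℝ) : gM p u v = f p ^ 2 * gFlat u v - phase u * phase v := by
  rw [f_sq]
  simp only [gM, gFlat, phase_apply]
  ring

lemma gM_x1_right (p v : ℝ × ℝ × ℝ) : gM p v x1 = -2 * phase v := by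
  rw [gM_eq, gFlat_comm, gFlat_x1_left, phase_x1]
  ring

lemma gM_U_U (p : ℝ × ℝ × ℝ) : gM p (U p) (U p) = -4 * f p ^ 2 := by
  simp only [U, gM_eq, gFlat, x1, phase_apply, Prod.smul_mk, smul_eq_mul]
  ring

lemma hasFDerivAt_f (p : ℝ × ℝ × ℝ) :
    HasFDerivAt f ((-sin (phase p) / (2 * f p)) • phase) p := by
  refine (((phase.hasFDerivAt (x := p)).cos.const_add 2).sqrt
    (two_add_cos_pos _).ne').congr_fderiv (ContinuousLinearMap.ext fun v => ?_)
  simp only [smul_apply, smul_eq_mul, f, phase_apply]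
  ring

/-- `f` is a function of the phase alone, and `phase x1 = 2`. -/
lemma fderiv_f_apply (p v : ℝ × ℝ × ℝ) :
    fderiv ℝ f p v = fderiv ℝ f p x1 / 2 * phase v := by
  simp only [(hasFDerivAt_f p).fderiv, smul_apply, smul_eq_mul, phase_x1]
  ring

lemma hasFDerivAt_U (p : ℝ × ℝ × ℝ) : HasFDerivAt U ((fderiv ℝ f p).smulRight x1) p :=
  (hasFDerivAt_f p).differentiableAt.hasFDerivAt.smul_const x1

lemma gM_smul_right (p u v : ℝ × ℝ × ℝ) (c : ℝ) : gM p u (c • v) = c * gM p u v := by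
  simp only [gM, Prod.smul_fst, Prod.smul_snd, smul_eq_mul]
  ring

lemma gM_zero_right (p u : ℝ × ℝ × ℝ) : gM p u 0 = 0 := by
  simpa using gM_smul_right p u 0 0

lemma gM_comm (p u v : ℝ × ℝ × ℝ) : gM p u v = gM p v u := by
  simp only [gM]
  ring

lemma gM_U_right (q v : ℝ × ℝ × ℝ) : gM q v (U q) = -2 * phase v * f q := by
  rw [U, gM_smul_right, gM_x1_right]
  ring

lemma fderiv_gM_U_right (v p w : ℝ × ℝ × ℝ) :
    fderiv ℝ (fun q => gM q v (U q)) p w = -2 * phase v * fderiv ℝ f p w := by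
  simp only [gM_U_right]
  rw [fderiv_const_mul (hasFDerivAt_f p).differentiableAt]
  rfl

lemma fderiv_gM_U_left (v p w : ℝ × ℝ × ℝ) :
    fderiv ℝ (fun q => gM q (U q) v) p w = -2 * phase v * fderiv ℝ f p w := by
  simp only [gM_comm _ (U _), fderiv_gM_U_right]

lemma fderiv_gM_const (u v p w : ℝ × ℝ × ℝ) :
    fderiv ℝ (fun q => gM q u v) p w = 2 * f p * fderiv ℝ f p w * gFlat u v := by
  have h : (fun q => gM q u v) = fun q => f q ^ 2 * gFlat u v - phase u * phase v :=
    funext fun q => gM_eq q u v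
  rw [h, ((((hasFDerivAt_f p).differentiableAt.hasFDerivAt.pow 2).mul_const _).sub_const _).fderiv]
  simp only [Nat.add_one_sub_one, pow_one, nsmul_eq_mul, Nat.cast_ofNat, smul_apply, smul_eq_mul]
  ring

lemma br_const_const (u z p : ℝ × ℝ × ℝ) : br (fun _ => u) (fun _ => z) p = 0 := by
  simp [br]

lemma br_U_const (z p : ℝ × ℝ × ℝ) : br U (fun _ => z) p = -fderiv ℝ f p z • x1 := by
  simp [br, (hasFDerivAt_U p).fderiv]

lemma br_const_U (u p : ℝ × ℝ × ℝ) : br (fun _ => u) U p = fderiv ℝ f p u • x1 := by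
  simp [br, (hasFDerivAt_U p).fderiv]

lemma koszul_U_const (u z p : ℝ × ℝ × ℝ) :
    fderiv ℝ (fun q => gM q (U q) z) p u
      + fderiv ℝ (fun q => gM q z u) p (U p)
      - fderiv ℝ (fun q => gM q u (U q)) p z
      - gM p u (br U (fun _ => z) p)
      + gM p (U p) (br (fun _ => z) (fun _ => u) p)
      + gM p z (br (fun _ => u) U p)
    = 2 * fderiv ℝ f p x1 * gM p u z := by
  have hU : U p = f p • x1 := rfl
  rw [fderiv_gM_U_left, fderiv_gM_const, fderiv_gM_U_right, br_U_const, br_const_const,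
    br_const_U, gM_smul_right, gM_smul_right, gM_x1_right, gM_x1_right, hU, map_smul,
    fderiv_f_apply p u, fderiv_f_apply p z, gM_eq p u z, gFlat_comm z u, gM_zero_right]
  ring

/-- Example 2.6 (on the universal cover `ℝ³` of `𝕊¹ × ℝ²`): the vector field
`U = f(t,x)(∂t - ∂x)` is timelike, and irrotational and conformal:
`∇_X U = X₁(f)·X` for `X ∈ {X₁, X₂, X₃}`, expressed through the Koszul formula
`2g(∇_V W, Z) = V g(W,Z) + W g(Z,V) - Z g(V,W) - g(V,[W,Z]) + g(W,[Z,V]) + g(Z,[V,W])`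
tested against the frame `{X₁, X₂, X₃}`. -/
theorem stmt_17 :
    (∀ p : ℝ × ℝ × ℝ, gM p (U p) (U p) < 0) ∧
    (∀ Xi ∈ ({X1, X2, X3} : Set (ℝ × ℝ × ℝ → ℝ × ℝ × ℝ)),
      ∀ Z ∈ ({X1, X2, X3} : Set (ℝ × ℝ × ℝ → ℝ × ℝ × ℝ)),
        ∀ p : ℝ × ℝ × ℝ,
          fderiv ℝ (fun q => gM q (U q) (Z q)) p (Xi p)
            + fderiv ℝ (fun q => gM q (Z q) (Xi q)) p (U p)
            - fderiv ℝ (fun q => gM q (Xi q) (U q)) p (Z p)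
            - gM p (Xi p) (br U Z p)
            + gM p (U p) (br Z Xi p)
            + gM p (Z p) (br Xi U p)
          = 2 * (fderiv ℝ f p x1) * gM p (Xi p) (Z p)) := by
  refine ⟨fun p => ?_, ?_⟩
  · rw [gM_U_U]
    linarith [pow_pos (f_pos p) 2]
  · have frame_const : ∀ X ∈ ({X1, X2, X3} : Set (ℝ × ℝ × ℝ → ℝ × ℝ × ℝ)),
        ∃ u, X = fun _ => u := by
      rintro _ (rfl | rfl | rfl) <;> exact ⟨_, rfl⟩
    intro Xi hXi Z hZ p
    obtain ⟨u, rfl⟩ := frame_const Xi hXi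
    obtain ⟨z, rfl⟩ := frame_const Z hZ
    exact koszul_U_const u z p

end Stmt17
end

section
/- Let (L, g₀) be a Riemannian manifold, I ⊂ ℝ an open interval, and g = -dt² + g_t a Lorentzian metric on I × L making the canonical foliations orthogonal, where g_t is a smooth family of metrics on L. Suppose E = ∂t is orthogonally conformal with L_E g(X,Y) = 2a·g(X,Y) for X,Y ⊥ E, where a = div E/(n-1). Then g_t = f(t,q)²·g₀ with f(t,q) = exp(∫₀ᵗ div E(s,q)/(n-1) ds), i.e., g is a twisted product. -/
open Set Real intervalIntegral

theorem hasDerivAt_intervalIntegral_of_continuousOn {E : Type*} [NormedAddCommGroup E]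
    [NormedSpace ℝ E] [CompleteSpace E] {s : Set ℝ} {f : ℝ → E} (hs : IsOpen s)
    (hs' : s.OrdConnected) (hf : ContinuousOn f s) {x₀ x : ℝ} (hx₀ : x₀ ∈ s) (hx : x ∈ s) :
    HasDerivAt (fun u => ∫ t in x₀..u, f t) (f x) x :=
  integral_hasDerivAt_right (hf.mono (hs'.uIcc_subset hx₀ hx)).intervalIntegrable
    (hf.stronglyMeasurableAtFilter hs x hx) (hf.continuousAt (hs.mem_nhds hx))

/-- `exp (-∫ a) * h` has derivative zero, hence is constant. -/
theorem eq_exp_intervalIntegral_mul_of_hasDerivAt {s : Set ℝ} {a h : ℝ → ℝ} (hs : IsOpen s)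
    (hs' : s.OrdConnected) (ha : ContinuousOn a s) (hh : ∀ x ∈ s, HasDerivAt h (a x * h x) x)
    {x₀ x : ℝ} (hx₀ : x₀ ∈ s) (hx : x ∈ s) :
    h x = exp (∫ t in x₀..x, a t) * h x₀ := by
  have hderiv_zero : ∀ y ∈ s, HasDerivAt (fun u => exp (-∫ t in x₀..u, a t) * h u) 0 y := fun y hy => by
    refine (((hasDerivAt_intervalIntegral_of_continuousOn hs hs' ha hx₀ hy).neg.exp).mul
      (hh y hy)).congr_deriv ?_
    ring
  have hconst := hs.is_const_of_deriv_eq_zero hs'.isPreconnected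
    (fun y hy => (hderiv_zero y hy).differentiableAt.differentiableWithinAt)
    (fun y hy => (hderiv_zero y hy).deriv) hx hx₀
  rw [integral_same, neg_zero, exp_zero, one_mul] at hconst
  rw [← hconst, ← mul_assoc, ← exp_add, add_neg_cancel, exp_zero, one_mul]

theorem stmt_18_general {L : Type*} {V : Type*} [AddCommGroup V] [Module ℝ V]
    (α β : ℝ) (hI : (0 : ℝ) ∈ Set.Ioo α β)
    (n : ℕ)
    (G : ℝ → L → V →ₗ[ℝ] V →ₗ[ℝ] ℝ)
    (divE : ℝ → L → ℝ)
    (hcont : ∀ q, ContinuousOn (fun t => divE t q) (Set.Ioo α β))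
    (hconf : ∀ q (v w : V), ∀ t ∈ Set.Ioo α β,
      HasDerivAt (fun s => G s q v w)
        (2 * (divE t q / ((n : ℝ) - 1)) * G t q v w) t) :
    ∀ t ∈ Set.Ioo α β, ∀ q (v w : V),
      G t q v w
        = (Real.exp (∫ s in (0 : ℝ)..t, divE s q / ((n : ℝ) - 1))) ^ 2 * G 0 q v w := by
  intro t ht q v w
  rw [eq_exp_intervalIntegral_mul_of_hasDerivAt isOpen_Ioo ordConnected_Ioo
    (((hcont q).div_const _).const_mul 2) (hconf q v w) hI ht, integral_const_mul, sq,
    ← exp_add, two_mul]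

/-- Lemma 2.3 (first part): on `I × L` with metric `g = -dt² + g_t` (the canonical
foliations orthogonal, `E = ∂t` unit timelike), if `E` is orthogonally conformal
with `(L_E g)(X,Y) = 2a·g(X,Y)` for `X,Y ⊥ E`, where `a = div E/(n-1)` — i.e. the
family of metrics `G t q` on the leaves satisfies `∂_t (G t q v w) = 2a(t,q)·G t q v w`
— then `G t q = f(t,q)²·G 0 q` with `f(t,q) = exp(∫₀ᵗ div E(s,q)/(n-1) ds)`:
the metric is the twisted product `-dt² + f(t,q)²g₀`. -/
theorem stmt_18 {L : Type*} {V : Type*} [AddCommGroup V] [Module ℝ V]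
    (α β : ℝ) (hI : (0 : ℝ) ∈ Set.Ioo α β)
    (n : ℕ) (hn : 2 ≤ n)
    (G : ℝ → L → V →ₗ[ℝ] V →ₗ[ℝ] ℝ)
    (Gsymm : ∀ t q v w, G t q v w = G t q w v)
    (divE : ℝ → L → ℝ)
    (hcont : ∀ q, ContinuousOn (fun t => divE t q) (Set.Ioo α β))
    (hconf : ∀ q (v w : V), ∀ t ∈ Set.Ioo α β,
      HasDerivAt (fun s => G s q v w)
        (2 * (divE t q / ((n : ℝ) - 1)) * G t q v w) t) :
    ∀ t ∈ Set.Ioo α β, ∀ q (v w : V),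
      G t q v w
        = (Real.exp (∫ s in (0 : ℝ)..t, divE s q / ((n : ℝ) - 1))) ^ 2 * G 0 q v w :=
  stmt_18_general α β hI n G divE hcont hconf
end
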